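/- If a strategy profile σ survives iterated deletion of minimax dominated strategies (σ ∈ NSD^∞(Γ)), then σ is minimax rationalizable: the sets Z_i = NSD_i^∞(Γ) witness minimax rationalizability of σ. -/

import Mathlib

/-!
In a finite game the antitone sequence `NSD u k` is eventually constant, say from round `K` on.
Then `NSD^∞ = NSD u K = NSD u (K + 1)`, so no strategy in `NSD^∞` is minimax dominated against
opponent profiles drawn from `NSD^∞`; this is the rationalizability inequality for `Z = NSD^∞`.
-/

open Function

section
variable {ι : Type*} [DecidableEq ι] {S : ι → Type*}

noncomputable def minv (u : ι → (∀ j, S j) → ℝ) (i : ι) (T : Set (∀ j, S j)) (σ : S i) : ℝ :=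
  sInf ((fun τ => u i (Function.update τ i σ)) '' T)

noncomputable def maxv (u : ι → (∀ j, S j) → ℝ) (i : ι) (T : Set (∀ j, S j)) (σ : S i) : ℝ :=
  sSup ((fun τ => u i (Function.update τ i σ)) '' T)

/-- `σ'` minimax dominates `σ` for player `i` w.r.t. opponent profile set `T`. -/
def MMDomBy (u : ι → (∀ j, S j) → ℝ) (i : ι) (T : Set (∀ j, S j)) (σ σ' : S i) : Prop :=
  minv u i T σ' > maxv u i T σ

def MMDom (u : ι → (∀ j, S j) → ℝ) (i : ι) (T : Set (∀ j, S j)) (σ : S i) : Prop :=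
  ∃ σ' : S i, MMDomBy u i T σ σ'

/-- Opponent profiles of player `i` compatible with the product set `Z`. -/
def Opp (Z : ∀ j, Set (S j)) (i : ι) : Set (∀ j, S j) := {τ | ∀ j, j ≠ i → τ j ∈ Z j}

/-- Iterated deletion of minimax dominated strategies. -/
noncomputable def NSD (u : ι → (∀ j, S j) → ℝ) : ℕ → ∀ i, Set (S i)
  | 0, _ => Set.univ
  | (k+1), i => {σ ∈ NSD u k i | ¬ MMDom u i (Opp (NSD u k) i) σ}


/-- `σ` is minimax rationalizable. -/
def MMRat {ι : Type*} [DecidableEq ι] {S : ι → Type*}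
    (u : ι → (∀ j, S j) → ℝ) (σ : ∀ j, S j) : Prop :=
  ∃ Z : ∀ i, Set (S i), (∀ i, (Z i).Nonempty) ∧ (∀ i, σ i ∈ Z i) ∧
    ∀ i, ∀ σ' ∈ Z i, ∀ σ'' : S i, maxv u i (Opp Z i) σ' ≥ minv u i (Opp Z i) σ''

section

variable (u : ι → (∀ j, S j) → ℝ)

lemma NSD_antitone : Antitone (NSD u) :=
  antitone_nat_of_succ_le fun _ _ _ hs => hs.1

lemma exists_iInter_NSD_eq [Finite ι] [∀ i, Finite (S i)] :
    ∃ K, (fun j => ⋂ k, NSD u k j) = NSD u K := by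
  obtain ⟨K, hK⟩ := WellFoundedLT.antitone_chain_condition (NSD_antitone u)
  refine ⟨K, funext fun j => (Set.iInter_subset _ K).antisymm (Set.subset_iInter fun m => ?_)⟩
  rcases le_total K m with hKm | hmK
  · exact (congrFun (hK m hKm) j).le
  · exact NSD_antitone u hmK j

lemma not_mmDom_of_mem_iInter_NSD [Finite ι] [∀ i, Finite (S i)] {i : ι} {s : S i}
    (hs : s ∈ ⋂ k, NSD u k i) : ¬ MMDom u i (Opp (fun j => ⋂ k, NSD u k j) i) s := by
  obtain ⟨K, hK⟩ := exists_iInter_NSD_eq u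
  rw [hK]
  exact (Set.mem_iInter.1 hs (K + 1)).2

end

variable {ι : Type*} [Fintype ι] [DecidableEq ι] {S : ι → Type*}
  [∀ i, Fintype (S i)] [∀ i, Nonempty (S i)]

theorem nsd_inf_minimax_rationalizable (u : ι → (∀ j, S j) → ℝ) (σ : ∀ j, S j)
    (h : ∀ i, σ i ∈ ⋂ k, NSD u k i) :
    (∀ i, (⋂ k, NSD u k i : Set (S i)).Nonempty) ∧
    (∀ i, ∀ σ' ∈ (⋂ k, NSD u k i : Set (S i)), ∀ σ'' : S i,
      maxv u i (Opp (fun j => ⋂ k, NSD u k j) i) σ' ≥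
        minv u i (Opp (fun j => ⋂ k, NSD u k j) i) σ'') ∧
    MMRat u σ := by
  have hrat : ∀ i, ∀ σ' ∈ (⋂ k, NSD u k i : Set (S i)), ∀ σ'' : S i,
      maxv u i (Opp (fun j => ⋂ k, NSD u k j) i) σ' ≥
        minv u i (Opp (fun j => ⋂ k, NSD u k j) i) σ'' := fun i σ' hσ' σ'' =>
    not_lt.1 fun hlt => not_mmDom_of_mem_iInter_NSD u hσ' ⟨σ'', hlt⟩
  have hne : ∀ i, (⋂ k, NSD u k i : Set (S i)).Nonempty := fun i => ⟨σ i, h i⟩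
  exact ⟨hne, hrat, fun j => ⋂ k, NSD u k j, hne, h, hrat⟩

end
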